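/- arXiv:2202.11565 — 2 statements merged into one kernel-verified Lean document; each statement's English description precedes it below -/
import Mathlib

section
/- Let q > 0. Define 𝔤₊(w,k) := q ∫ₖ^w |s|^{q-1} (s-k)₊ ds for w,k ∈ ℝ (with (s-k)₊ = max(s-k,0)). Then there exists a constant c = c(q) > 0 such that for all w,k ∈ ℝ: (1/c) (|w| + |k|)^{q-1} (w-k)₊² ≤ 𝔤₊(w,k) ≤ c (|w| + |k|)^{q-1} (w-k)₊². -/
open MeasureTheory Real

open Set intervalIntegral

lemma absRpowInt {r : ℝ} (hr : -1 < r) (a b : ℝ) :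
    IntervalIntegrable (fun s => |s| ^ r) volume a b := by
  suffices H : ∀ c : ℝ, IntervalIntegrable (fun s : ℝ => |s| ^ r) volume 0 c from
    (H a).symm.trans (H b)
  intro c
  rcases le_total 0 c with hc | hc
  · apply (intervalIntegrable_rpow' hr (a := 0) (b := c)).congr
    intro x hx; dsimp only
    rw [uIoc_of_le hc] at hx
    rw [abs_of_nonneg hx.1.le]
  · have h1 : IntervalIntegrable (fun s : ℝ => (-s) ^ r) volume c 0 := by
      rw [IntervalIntegrable.iff_comp_neg]
      simpa using intervalIntegrable_rpow' hr (a := -c) (b := 0)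
    refine ((h1.congr ?_).symm)
    intro x hx; dsimp only
    rw [uIoc_of_le hc] at hx
    rw [abs_of_nonpos hx.2]

lemma absRpowIntegral {r : ℝ} (hr : -1 < r) {c : ℝ} (hc : 0 ≤ c) :
    ∫ s in (-c)..c, |s| ^ r = 2 * c ^ (r + 1) / (r + 1) := by
  have h0 : ∫ s in (0:ℝ)..c, |s| ^ r = c ^ (r + 1) / (r + 1) := by
    rw [intervalIntegral.integral_congr (g := fun s => s ^ r)
      (fun x hx => by rw [uIcc_of_le hc] at hx; rw [abs_of_nonneg hx.1]),
      integral_rpow (Or.inl hr), Real.zero_rpow (by linarith), sub_zero]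
  have h1 : ∫ s in (-c)..(0:ℝ), |s| ^ r = c ^ (r + 1) / (r + 1) := by
    rw [intervalIntegral.integral_congr (g := fun s => (-s) ^ r)
      (fun x hx => by rw [uIcc_of_le (by linarith : -c ≤ 0)] at hx; rw [abs_of_nonpos hx.2])]
    rw [show (fun s : ℝ => (-s) ^ r) = (fun s : ℝ => (fun x : ℝ => x ^ r) (-s)) from rfl,
      intervalIntegral.integral_comp_neg (f := fun x : ℝ => x ^ r), neg_zero, neg_neg,
      integral_rpow (Or.inl hr), Real.zero_rpow (by linarith), sub_zero]
  rw [← intervalIntegral.integral_add_adjacent_intervals (b := (0:ℝ))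
    (absRpowInt hr _ _) (absRpowInt hr _ _), h0, h1]
  ring

lemma keyLower {r M x : ℝ} (hM : 0 < M) (h1 : M / 8 ≤ |x|) (h2 : |x| ≤ M) :
    8 ^ (-|r|) * M ^ r ≤ |x| ^ r := by
  rcases le_or_gt 0 r with hrpos | hrneg
  · rw [abs_of_nonneg hrpos]
    have h3 : (M / 8) ^ r ≤ |x| ^ r := rpow_le_rpow (by positivity) h1 hrpos
    calc (8:ℝ) ^ (-r) * M ^ r = (M / 8) ^ r := by
          rw [div_rpow hM.le (by norm_num), rpow_neg (by norm_num : (0:ℝ) ≤ 8)]; ring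
      _ ≤ |x| ^ r := h3
  · rw [abs_of_neg hrneg, neg_neg]
    have h3 : M ^ r ≤ |x| ^ r := rpow_le_rpow_of_nonpos (by linarith) h2 hrneg.le
    have h4 : (8:ℝ) ^ r ≤ 1 := rpow_le_one_of_one_le_of_nonpos (by norm_num) hrneg.le
    have h5 : 0 < M ^ r := rpow_pos_of_pos hM r
    nlinarith

set_option maxHeartbeats 2000000 in
/-- Upper and lower bound for `𝔤₊(w,k) = q ∫ₖ^w |s|^{q-1} (s-k)₊ ds`. -/
theorem stmt_0 (q : ℝ) (hq : 0 < q) :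
    ∃ c : ℝ, 0 < c ∧ ∀ w k : ℝ,
      (1 / c) * (|w| + |k|) ^ (q - 1) * (max (w - k) 0) ^ 2 ≤
        q * ∫ s in k..w, |s| ^ (q - 1) * max (s - k) 0 ∧
      q * (∫ s in k..w, |s| ^ (q - 1) * max (s - k) 0) ≤
        c * (|w| + |k|) ^ (q - 1) * (max (w - k) 0) ^ 2 := by
  have hr : -1 < q - 1 := by linarith
  set r := q - 1 with hrdef
  have h8 : (0:ℝ) < 8 ^ (|r| + 2) := rpow_pos_of_pos (by norm_num) _
  have h8' : (0:ℝ) < 8 ^ |r| := rpow_pos_of_pos (by norm_num) _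
  set c := q + 8 ^ (|r| + 2) / q + 8 ^ |r| + 32 with hcdef
  have hcpos : 0 < c := by have := div_pos h8 hq; rw [hcdef]; linarith
  clear_value r c
  refine ⟨c, hcpos, fun w k => ?_⟩
  rcases le_or_gt w k with hwk | hwk
  · have hI : (∫ s in k..w, |s| ^ r * max (s - k) 0) = 0 := by
      have heq : EqOn (fun s : ℝ => |s| ^ r * max (s - k) 0) (fun _ => (0:ℝ)) (uIcc k w) := by
        intro x hx
        rw [uIcc_of_ge hwk] at hx
        simp [max_eq_right (by linarith [hx.2] : x - k ≤ 0)]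
      rw [intervalIntegral.integral_congr heq, intervalIntegral.integral_zero]
    rw [hI, max_eq_right (by linarith : w - k ≤ 0)]
    norm_num

  · -- main case k < w
    set L := w - k with hLdef
    set M := |w| + |k| with hMdef
    clear_value L M
    have hwabs : w ≤ |w| := le_abs_self w
    have hkabs : -k ≤ |k| := neg_le_abs k
    have hL : 0 < L := by rw [hLdef]; linarith
    have hLM : L ≤ M := by rw [hLdef, hMdef]; linarith
    have hM : 0 < M := lt_of_lt_of_le hL hLM
    have hMr : 0 < M ^ r := rpow_pos_of_pos hM r
    have hmax : max L 0 = L := max_eq_left hL.le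
    have habs_le : ∀ s, k ≤ s → s ≤ w → |s| ≤ M := by
      intro s h1 h2
      rcases abs_cases s with ⟨h, _⟩ | ⟨h, _⟩ <;> rcases abs_cases w with ⟨h', _⟩ | ⟨h', _⟩ <;>
        rcases abs_cases k with ⟨h'', _⟩ | ⟨h'', _⟩ <;> rw [hMdef] <;> linarith
    have hInt : ∀ a b : ℝ, IntervalIntegrable (fun s => |s| ^ r * max (s - k) 0) volume a b :=
      fun a b => (absRpowInt hr a b).mul_continuousOn
        (Continuous.continuousOn (by fun_prop))
    have hnn : ∀ s : ℝ, 0 ≤ |s| ^ r * max (s - k) 0 := fun s => by positivity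
    rw [hmax]
    constructor
    · -- lower bound
      obtain ⟨u, hku, huw, hJ⟩ : ∃ u, k ≤ u ∧ u + L / 8 ≤ w ∧
          ∀ s ∈ Icc u (u + L / 8), M / 8 ≤ |s| ∧ L / 8 ≤ s - k := by
        rcases le_or_gt (L / 2) w with h | h
        · refine ⟨w - L / 8, by linarith, by linarith, fun s hs => ?_⟩
          obtain ⟨hs1, hs2⟩ := hs
          have hw0 : 0 < w := by linarith
          have hs0 : 0 < s := by linarith
          have hk1 : |k| ≤ w + L := by rw [abs_le]; constructor <;> rw [hLdef] at * <;> linarith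
          have hMw : M ≤ 4 * w := by rw [hMdef, abs_of_pos hw0]; linarith
          rw [abs_of_pos hs0]
          constructor <;> [linarith; (rw [hLdef] at *; linarith)]
        · refine ⟨k + L / 8, by linarith, by linarith, fun s hs => ?_⟩
          obtain ⟨hs1, hs2⟩ := hs
          have hk0 : k < 0 := by rw [hLdef] at *; linarith
          have hs0 : s < 0 := by rw [hLdef] at *; linarith
          have hwk' : |w| ≤ -k := by
            rcases abs_cases w with ⟨h', _⟩ | ⟨h', _⟩ <;> rw [hLdef] at * <;> linarith
          have hMk : M ≤ -2 * k := by rw [hMdef, abs_of_neg hk0]; linarith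
          have hLk : L ≤ -2 * k := by rw [hLdef, hMdef] at *; linarith
          rw [abs_of_neg hs0]
          constructor <;> linarith
      have step1 : ∫ s in u..(u + L / 8), (8 ^ (-|r|) * M ^ r * (L / 8)) ≤
          ∫ s in u..(u + L / 8), |s| ^ r * max (s - k) 0 := by
        apply intervalIntegral.integral_mono_on (by linarith) intervalIntegrable_const
          (hInt u (u + L / 8))
        intro x hx
        obtain ⟨hx1, hx2⟩ := hJ x hx
        have hxk : k ≤ x := le_trans hku hx.1
        have hxw : x ≤ w := le_trans hx.2 huw
        have hb : 8 ^ (-|r|) * M ^ r ≤ |x| ^ r := keyLower hM hx1 (habs_le x hxk hxw)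
        rw [max_eq_left (by linarith : (0:ℝ) ≤ x - k)]
        exact mul_le_mul hb hx2 (by linarith) (rpow_nonneg (abs_nonneg x) r)
      have step0 : ∫ s in u..(u + L / 8), (8 ^ (-|r|) * M ^ r * (L / 8)) =
          (L / 8) * (8 ^ (-|r|) * M ^ r * (L / 8)) := by
        rw [intervalIntegral.integral_const, smul_eq_mul]; ring
      have step2 : ∫ s in u..(u + L / 8), |s| ^ r * max (s - k) 0 ≤
          ∫ s in k..w, |s| ^ r * max (s - k) 0 :=
        intervalIntegral.integral_mono_interval hku (by linarith) huw
          (Filter.Eventually.of_forall fun s => hnn s) (hInt k w)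
      have key : (L / 8) * (8 ^ (-|r|) * M ^ r * (L / 8)) ≤
          ∫ s in k..w, |s| ^ r * max (s - k) 0 := step0 ▸ (step1.trans step2)
      have hqc : (8:ℝ) ^ (|r| + 2) ≤ q * c := by
        rw [hcdef]
        have h1 : q * (8 ^ (|r| + 2) / q) = 8 ^ (|r| + 2) := by field_simp
        nlinarith [mul_pos hq h8', sq_nonneg q]
      have h1c : 1 / c ≤ q / 8 ^ (|r| + 2) := by
        rw [div_le_div_iff₀ hcpos h8]; linarith
      have hsplit : (8:ℝ) ^ (|r| + 2) = 8 ^ |r| * 64 := by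
        rw [rpow_add (by norm_num : (0:ℝ) < 8), show ((2:ℝ) = ((2:ℕ):ℝ)) by norm_num,
          rpow_natCast]
        norm_num
      have h8neg : (8:ℝ) ^ (-|r|) = (8 ^ |r|)⁻¹ := rpow_neg (by norm_num) _
      calc 1 / c * M ^ r * L ^ 2 ≤ q / 8 ^ (|r| + 2) * M ^ r * L ^ 2 :=
            mul_le_mul_of_nonneg_right (mul_le_mul_of_nonneg_right h1c hMr.le) (sq_nonneg L)
        _ = q * ((L / 8) * (8 ^ (-|r|) * M ^ r * (L / 8))) := by
            rw [h8neg, hsplit]; field_simp; ring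
        _ ≤ q * ∫ s in k..w, |s| ^ r * max (s - k) 0 :=
            mul_le_mul_of_nonneg_left key hq.le
    · -- upper bound
      rcases le_or_gt 1 q with hq1 | hq1
      · -- q ≥ 1
        have hpt : ∀ x ∈ Icc k w, |x| ^ r * max (x - k) 0 ≤ M ^ r * L := by
          intro x hx
          have h1 : |x| ^ r ≤ M ^ r :=
            rpow_le_rpow (abs_nonneg x) (habs_le x hx.1 hx.2) (by rw [hrdef]; linarith)
          have h2 : max (x - k) 0 ≤ L := max_le (by rw [hLdef]; linarith [hx.2]) hL.le
          exact mul_le_mul h1 h2 (le_max_right _ _) hMr.le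
        have hIb : (∫ s in k..w, |s| ^ r * max (s - k) 0) ≤ M ^ r * L * L := by
          calc (∫ s in k..w, |s| ^ r * max (s - k) 0) ≤ ∫ _ in k..w, M ^ r * L :=
                intervalIntegral.integral_mono_on hwk.le (hInt k w) intervalIntegrable_const hpt
            _ = M ^ r * L * L := by
                rw [intervalIntegral.integral_const, smul_eq_mul, ← hLdef]; ring
        have hqle : q ≤ c := by
          rw [hcdef]; have := div_pos h8 hq; linarith
        have hA : q * (∫ s in k..w, |s| ^ r * max (s - k) 0) ≤ q * (M ^ r * L * L) :=
          mul_le_mul_of_nonneg_left hIb hq.le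
        have hB : q * (M ^ r * L * L) ≤ c * (M ^ r * L * L) :=
          mul_le_mul_of_nonneg_right hqle (by positivity)
        nlinarith
      · -- q < 1
        have hr0 : r < 0 := by rw [hrdef]; linarith
        rcases le_or_gt M (4 * L) with hM4 | hM4
        · -- M ≤ 4L
          have hpt : ∀ x ∈ Icc k w, |x| ^ r * max (x - k) 0 ≤ |x| ^ r * L := fun x hx =>
            mul_le_mul_of_nonneg_left
              (max_le (by rw [hLdef]; linarith [hx.2]) hL.le)
              (rpow_nonneg (abs_nonneg x) r)
          have s1 : (∫ s in k..w, |s| ^ r * max (s - k) 0) ≤ ∫ s in k..w, |s| ^ r * L :=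
            intervalIntegral.integral_mono_on hwk.le (hInt k w)
              ((absRpowInt hr k w).mul_continuousOn continuousOn_const) hpt
          have s2 : (∫ s in k..w, |s| ^ r * L) = (∫ s in k..w, |s| ^ r) * L :=
            intervalIntegral.integral_mul_const _ _
          have s3 : (∫ s in k..w, |s| ^ r) ≤ ∫ s in (-(4 * L))..(4 * L), |s| ^ r := by
            apply intervalIntegral.integral_mono_interval _ hwk.le _
              (Filter.Eventually.of_forall fun s => rpow_nonneg (abs_nonneg s) r)
              (absRpowInt hr _ _)
            · have := neg_abs_le k; rw [hMdef] at hM4; linarith [abs_nonneg w]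
            · rw [hMdef] at hM4; linarith [abs_nonneg k]
          have s4 : (∫ s in (-(4 * L))..(4 * L), |s| ^ r) = 2 * (4 * L) ^ (r + 1) / (r + 1) :=
            absRpowIntegral hr (by linarith)
          have hq' : r + 1 = q := by rw [hrdef]; ring
          rw [hq'] at s4
          have h4q : (4:ℝ) ^ q ≤ 4 := by
            calc (4:ℝ) ^ q ≤ 4 ^ (1:ℝ) :=
                  rpow_le_rpow_of_exponent_le (by norm_num) hq1.le
              _ = 4 := rpow_one 4
          have hA : (4 * L) ^ q ≤ 4 * L ^ q := by
            rw [mul_rpow (by norm_num) hL.le]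
            exact mul_le_mul_of_nonneg_right h4q (rpow_nonneg hL.le q)
          have hB : L ^ q = L ^ r * L := by
            rw [← hq', rpow_add hL, rpow_one]
          have hC : L ^ r ≤ 4 * M ^ r := by
            have h1 : L ^ r ≤ (M / 4) ^ r :=
              rpow_le_rpow_of_nonpos (by positivity) (by linarith) hr0.le
            have h2 : (M / 4) ^ r = M ^ r / 4 ^ r := div_rpow hM.le (by norm_num : (0:ℝ) ≤ 4) r
            have h3 : (4:ℝ) ^ (-r) ≤ 4 := by
              calc (4:ℝ) ^ (-r) ≤ 4 ^ (1:ℝ) :=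
                    rpow_le_rpow_of_exponent_le (by norm_num) (by rw [hrdef]; linarith)
                _ = 4 := rpow_one 4
            have h4 : (4:ℝ) ^ (-r) = ((4:ℝ) ^ r)⁻¹ := rpow_neg (by norm_num) r
            have h5 : (0:ℝ) < 4 ^ r := rpow_pos_of_pos (by norm_num) r
            rw [h2] at h1
            rw [div_eq_mul_inv, ← h4] at h1
            nlinarith
          have hc32 : 32 ≤ c := by
            rw [hcdef]; have := div_pos h8 hq; linarith
          have hIpos : 0 ≤ (4 * L) ^ q := rpow_nonneg (by linarith) q
          have hfin : q * (∫ s in k..w, |s| ^ r * max (s - k) 0) ≤ 2 * (4 * L) ^ q * L := by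
            have : (∫ s in k..w, |s| ^ r * max (s - k) 0) ≤ 2 * (4 * L) ^ q / q * L := by
              calc (∫ s in k..w, |s| ^ r * max (s - k) 0) ≤ (∫ s in k..w, |s| ^ r) * L := by
                    rw [← s2]; exact s1
                _ ≤ 2 * (4 * L) ^ q / q * L := by
                    apply mul_le_mul_of_nonneg_right _ hL.le
                    rw [← s4]; exact s3
            calc q * (∫ s in k..w, |s| ^ r * max (s - k) 0) ≤ q * (2 * (4 * L) ^ q / q * L) :=
                  mul_le_mul_of_nonneg_left this hq.le
              _ = 2 * (4 * L) ^ q * L := by field_simp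
          have hchain : 2 * (4 * L) ^ q * L ≤ c * M ^ r * L ^ 2 := by
            nlinarith [mul_pos hMr (mul_pos hL hL), rpow_nonneg hL.le q,
              mul_le_mul_of_nonneg_right hC (mul_pos hL hL).le]
          linarith
        · -- 4L < M
          have h0far : ∀ s, k ≤ s → s ≤ w → M / 8 ≤ |s| := by
            intro s h1 h2
            rcases le_or_gt 0 k with hk0 | hk0
            · have haw : |w| = w := abs_of_pos (by linarith)
              have hak : |k| = k := abs_of_nonneg hk0
              rw [abs_of_nonneg (le_trans hk0 h1)]
              linarith [hMdef, hLdef, haw, hak]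
            · rcases le_or_gt w 0 with hw0 | hw0
              · have haw : |w| = -w := abs_of_nonpos hw0
                have hak : |k| = -k := abs_of_neg hk0
                rw [abs_of_nonpos (le_trans h2 hw0)]
                linarith [hMdef, hLdef, haw, hak]
              · exfalso
                have haw : |w| = w := abs_of_pos hw0
                have hak : |k| = -k := abs_of_neg hk0
                linarith [hMdef, hLdef, haw, hak]
          have hpt : ∀ x ∈ Icc k w, |x| ^ r * max (x - k) 0 ≤ (M / 8) ^ r * L := by
            intro x hx
            have h1 : |x| ^ r ≤ (M / 8) ^ r :=
              rpow_le_rpow_of_nonpos (by positivity) (h0far x hx.1 hx.2) hr0.le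
            have h2 : max (x - k) 0 ≤ L := max_le (by rw [hLdef]; linarith [hx.2]) hL.le
            exact mul_le_mul h1 h2 (le_max_right _ _) (rpow_nonneg (by positivity) r)
          have hIb : (∫ s in k..w, |s| ^ r * max (s - k) 0) ≤ (M / 8) ^ r * L * L := by
            calc (∫ s in k..w, |s| ^ r * max (s - k) 0) ≤ ∫ _ in k..w, (M / 8) ^ r * L :=
                  intervalIntegral.integral_mono_on hwk.le (hInt k w)
                    intervalIntegrable_const hpt
              _ = (M / 8) ^ r * L * L := by
                  rw [intervalIntegral.integral_const, smul_eq_mul, ← hLdef]; ring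
          have hM8 : (M / 8) ^ r ≤ 8 * M ^ r := by
            have h2 : (M / 8) ^ r = M ^ r / 8 ^ r := div_rpow hM.le (by norm_num : (0:ℝ) ≤ 8) r
            have h3 : (8:ℝ) ^ (-r) ≤ 8 := by
              calc (8:ℝ) ^ (-r) ≤ 8 ^ (1:ℝ) :=
                    rpow_le_rpow_of_exponent_le (by norm_num) (by rw [hrdef]; linarith)
                _ = 8 := rpow_one 8
            have h4 : (8:ℝ) ^ (-r) = ((8:ℝ) ^ r)⁻¹ := rpow_neg (by norm_num) r
            have h5 : (0:ℝ) < 8 ^ r := rpow_pos_of_pos (by norm_num) r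
            rw [h2, div_eq_mul_inv, ← h4]
            nlinarith
          have hc8le : 8 ≤ c := by
            rw [hcdef]; have := div_pos h8 hq; linarith
          have hInn : 0 ≤ (∫ s in k..w, |s| ^ r * max (s - k) 0) :=
            intervalIntegral.integral_nonneg hwk.le (fun x _ => hnn x)
          have hA : q * (∫ s in k..w, |s| ^ r * max (s - k) 0) ≤ (M / 8) ^ r * L * L := by
            nlinarith [rpow_nonneg (show (0:ℝ) ≤ M / 8 by positivity) r,
              mul_pos hL hL]
          have hB : (M / 8) ^ r * L * L ≤ 8 * M ^ r * L ^ 2 := by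
            nlinarith [mul_pos hL hL]
          have hCc : 8 * M ^ r * L ^ 2 ≤ c * M ^ r * L ^ 2 := by
            nlinarith [mul_pos hMr (mul_pos hL hL)]
          linarith
end

section
/- Let q > 0. Define 𝔤₋(w,k) := -q ∫ₖ^w |s|^{q-1} (s-k)₋ ds for w,k ∈ ℝ, where (s-k)₋ = max(k-s,0). Then there exists c = c(q) > 0 such that for all w,k ∈ ℝ: (1/c)(|w|+|k|)^{q-1}(w-k)₋² ≤ 𝔤₋(w,k) ≤ c(|w|+|k|)^{q-1}(w-k)₋². -/
open MeasureTheory Real intervalIntegral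

lemma abs_rpow_intInt {r : ℝ} (hr : -1 < r) (a b : ℝ) :
    IntervalIntegrable (fun x => |x| ^ r) volume a b := by
  suffices h : ∀ c : ℝ, IntervalIntegrable (fun x => |x| ^ r) volume 0 c by
    exact (h a).symm.trans (h b)
  have key : ∀ c : ℝ, 0 ≤ c → IntervalIntegrable (fun x => |x| ^ r) volume 0 c := by
    intro c hc
    apply (intervalIntegrable_rpow' hr (a := 0) (b := c)).congr
    rw [Set.uIoc_of_le hc]
    intro x hx
    dsimp only
    rw [abs_of_pos hx.1]
  intro c
  rcases le_total 0 c with hc | hc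
  · exact key c hc
  · rw [IntervalIntegrable.iff_comp_neg]
    simpa using key (-c) (by linarith)

lemma int_k_sub (k a b : ℝ) : ∫ s in a..b, (k - s) = k * (b - a) - (b^2 - a^2)/2 := by
  rw [intervalIntegral.integral_sub intervalIntegrable_const intervalIntegrable_id,
    intervalIntegral.integral_const, integral_id]
  simp [smul_eq_mul]; ring

lemma int_abs_sym (q : ℝ) (hq : 0 < q) {M : ℝ} (hM : 0 ≤ M) :
    ∫ s in (-M)..M, |s| ^ (q - 1) = 2 * M ^ q / q := by
  have hr : (-1:ℝ) < q - 1 := by linarith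
  have h0M : ∫ s in (0:ℝ)..M, |s| ^ (q - 1) = M ^ q / q := by
    rw [intervalIntegral.integral_congr (g := fun s => s ^ (q-1))
      (fun s hs => by rw [Set.uIcc_of_le hM] at hs; rw [abs_of_nonneg hs.1]),
      integral_rpow (Or.inl hr), Real.zero_rpow (by linarith : q - 1 + 1 ≠ 0)]
    ring_nf
  have hneg : ∫ s in (-M)..(0:ℝ), |s| ^ (q - 1) = M ^ q / q := by
    have := intervalIntegral.integral_comp_neg (a := (0:ℝ)) (b := M)
      (fun s => |s| ^ (q - 1))
    simp only [abs_neg, neg_zero] at this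
    rw [← this, h0M]
  rw [← intervalIntegral.integral_add_adjacent_intervals (b := (0:ℝ))
    (abs_rpow_intInt hr _ _) (abs_rpow_intInt hr _ _), hneg, h0M]
  ring

lemma aux_lower (q : ℝ) {M x : ℝ} (hM : 0 < M) (h1 : M / 4 ≤ x) (h2 : x ≤ M) :
    M ^ (q - 1) / 4 ^ |q - 1| ≤ x ^ (q - 1) := by
  have hx : 0 < x := lt_of_lt_of_le (by linarith) h1
  rcases le_or_gt 1 q with h | h
  · rw [abs_of_nonneg (by linarith : (0:ℝ) ≤ q - 1)]
    calc M ^ (q-1) / 4 ^ (q-1) = (M / 4) ^ (q - 1) := by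
          rw [Real.div_rpow hM.le (by norm_num)]
      _ ≤ x ^ (q - 1) := Real.rpow_le_rpow (by linarith) h1 (by linarith)
  · have hle : M ^ (q - 1) ≤ x ^ (q - 1) := Real.rpow_le_rpow_of_nonpos hx h2 (by linarith)
    have h4 : (1:ℝ) ≤ 4 ^ |q - 1| := Real.one_le_rpow (by norm_num) (abs_nonneg _)
    have hMp : (0:ℝ) ≤ M ^ (q - 1) := Real.rpow_nonneg hM.le _
    calc M ^ (q-1) / 4 ^ |q-1| ≤ M ^ (q-1) / 1 := div_le_div_of_nonneg_left hMp one_pos h4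
      _ = M ^ (q-1) := div_one _
      _ ≤ _ := hle

lemma aux_upper1 (q : ℝ) {M x : ℝ} (hq : 1 ≤ q) (hx : 0 ≤ x) (h2 : x ≤ M) :
    x ^ (q - 1) ≤ 4 ^ |q - 1| * M ^ (q - 1) := by
  have h4 : (1:ℝ) ≤ 4 ^ |q - 1| := Real.one_le_rpow (by norm_num) (abs_nonneg _)
  calc x ^ (q-1) ≤ M ^ (q-1) := Real.rpow_le_rpow hx h2 (by linarith)
    _ = 1 * M ^ (q-1) := (one_mul _).symm
    _ ≤ _ := mul_le_mul_of_nonneg_right h4 (Real.rpow_nonneg (hx.trans h2) _)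

lemma aux_upper2 (q : ℝ) {M x : ℝ} (hq : q < 1) (hM : 0 < M) (h1 : M / 4 ≤ x) :
    x ^ (q - 1) ≤ 4 ^ |q - 1| * M ^ (q - 1) := by
  have hx : 0 < M / 4 := by linarith
  calc x ^ (q-1) ≤ (M / 4) ^ (q - 1) := Real.rpow_le_rpow_of_nonpos hx h1 (by linarith)
    _ = 4 ^ |q-1| * M ^ (q-1) := by
        rw [Real.div_rpow hM.le (by norm_num), abs_of_neg (by linarith : q - 1 < 0),
          Real.rpow_neg (by norm_num : (0:ℝ) ≤ 4)]
        field_simp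

/-- Upper and lower bound for `𝔤₋(w,k) = -q ∫ₖ^w |s|^{q-1} (s-k)₋ ds`. -/
theorem stmt_1 (q : ℝ) (hq : 0 < q) :
    ∃ c : ℝ, 0 < c ∧ ∀ w k : ℝ,
      (1 / c) * (|w| + |k|) ^ (q - 1) * (max (k - w) 0) ^ 2 ≤
        -q * ∫ s in k..w, |s| ^ (q - 1) * max (k - s) 0 ∧
      -q * (∫ s in k..w, |s| ^ (q - 1) * max (k - s) 0) ≤
        c * (|w| + |k|) ^ (q - 1) * (max (k - w) 0) ^ 2 := by
  have hr : (-1:ℝ) < q - 1 := by linarith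
  have hq0 : q ≠ 0 := hq.ne'
  set P : ℝ := 4 ^ |q - 1| with hPdef
  have hP1 : (1:ℝ) ≤ P := Real.one_le_rpow (by norm_num) (abs_nonneg _)
  have hP : 0 < P := lt_of_lt_of_le one_pos hP1
  have hP0 : P ≠ 0 := hP.ne'
  refine ⟨(32 / q + 32 * q + 8) * P, by positivity, fun w k => ?_⟩
  set c := (32 / q + 32 * q + 8) * P with hcdef
  have hc : 0 < c := by positivity
  clear_value P c
  have h32q : (0:ℝ) < 32 / q := by positivity
  have h8c : (8:ℝ) ≤ c := by
    rw [hcdef]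
    calc (8:ℝ) = 8 * 1 := by ring
      _ ≤ (32 / q + 32 * q + 8) * P :=
          mul_le_mul (by linarith) hP1 zero_le_one (by positivity)
  have hacb : q * P / 2 ≤ c := by
    rw [hcdef]
    calc q * P / 2 = (q / 2) * P := by ring
      _ ≤ (32 / q + 32 * q + 8) * P :=
          mul_le_mul_of_nonneg_right (by linarith) hP.le
  have hcq : 32 * P ≤ c * q := by
    have hq' : (32 / q + 32 * q + 8) * q = 32 + 32 * q^2 + 8 * q := by
      field_simp
    have heq : c * q = (32 + 32 * q^2 + 8 * q) * P := by
      rw [hcdef, ← hq']; ring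
    rw [heq]
    exact mul_le_mul_of_nonneg_right (by nlinarith [sq_nonneg q]) hP.le
  rcases le_or_gt k w with hkw | hwk
  · -- trivial case `w ≥ k`
    have h1 : max (k - w) 0 = 0 := max_eq_right (by linarith)
    have h2 : (∫ s in k..w, |s| ^ (q - 1) * max (k - s) 0) = 0 := by
      rw [intervalIntegral.integral_congr (g := fun _ => (0:ℝ))
        (fun s hs => by
          rw [Set.uIcc_of_le hkw] at hs
          simp [max_eq_right (by linarith [hs.1] : k - s ≤ 0)])]
      simp
    rw [h1, h2]
    norm_num
  · -- main case `w < k`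
    set M : ℝ := |w| + |k| with hMdef
    set L : ℝ := k - w with hLdef
    have hL : 0 < L := by rw [hLdef]; linarith
    have hwM : -M ≤ w := by rw [hMdef]; linarith [neg_abs_le w, abs_nonneg k]
    have hkM : k ≤ M := by rw [hMdef]; linarith [le_abs_self k, abs_nonneg w]
    have hLM : L ≤ M := by
      rw [hLdef, hMdef]; linarith [le_abs_self k, neg_abs_le w]
    have hM : 0 < M := lt_of_lt_of_le hL hLM
    have hmax : max L 0 = L := max_eq_left hL.le
    -- integrability
    have hIg : ∀ a b : ℝ, IntervalIntegrable (fun s => |s| ^ (q-1) * (k - s)) volume a b :=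
      fun a b => (abs_rpow_intInt hr a b).mul_continuousOn
        ((continuous_const.sub continuous_id).continuousOn)
    -- nonnegativity of the integrand on Ioc a b with b ≤ k
    have hae : ∀ a b : ℝ, b ≤ k → (0:ℝ → ℝ) ≤ᵐ[volume.restrict (Set.Ioc a b)]
        (fun s => |s| ^ (q-1) * (k - s)) := by
      intro a b hb
      filter_upwards [ae_restrict_mem measurableSet_Ioc] with s hs
      exact mul_nonneg (Real.rpow_nonneg (abs_nonneg _) _) (by linarith [hs.2])
    -- flip the integral
    have hflip : -q * (∫ s in k..w, |s| ^ (q - 1) * max (k - s) 0)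
        = q * ∫ s in w..k, |s| ^ (q-1) * (k - s) := by
      rw [intervalIntegral.integral_symm w k,
        intervalIntegral.integral_congr (g := fun s => |s| ^ (q-1) * (k - s))
          (fun s hs => by
            rw [Set.uIcc_of_le hwk.le] at hs
            rw [max_eq_left (by linarith [hs.2] : (0:ℝ) ≤ k - s)])]
      ring
    set I : ℝ := ∫ s in w..k, |s| ^ (q-1) * (k - s) with hIdef
    have hMq1 : (0:ℝ) ≤ M ^ (q-1) := Real.rpow_nonneg hM.le _
    clear_value M L I
    -- LOWER BOUND
    have key_low : M ^ (q-1) / P * (L^2/32) ≤ I := by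
      rcases le_or_gt (|k|) (|w|) with hcase | hcase
      · -- left subinterval [w, w + L/4]
        have hw0 : w < 0 := by
          by_contra h
          push_neg at h
          have h1 : |w| = w := abs_of_nonneg h
          have h2 : k ≤ |k| := le_abs_self k
          linarith
        have hwhalf : M / 2 ≤ |w| := by rw [hMdef]; linarith
        have habsw : |w| = -w := abs_of_neg hw0
        rw [habsw] at hwhalf
        have hptw : ∀ s ∈ Set.Icc w (w + L/4),
            M ^ (q-1) / P * (3*L/4) ≤ |s| ^ (q-1) * (k - s) := by
          intro s hs
          have h1 : M/4 ≤ |s| := by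
            have hsle : s ≤ w + L/4 := hs.2
            have : M/4 ≤ -s := by linarith
            linarith [neg_le_abs s]
          have h2 : |s| ≤ M := by
            rw [abs_le]
            refine ⟨by linarith [hs.1], ?_⟩
            have : s ≤ w + L/4 := hs.2
            linarith
          have h3 : 3*L/4 ≤ k - s := by
            have : s ≤ w + L/4 := hs.2
            linarith
          have hlow := aux_lower q hM h1 h2
          rw [← hPdef] at hlow
          exact mul_le_mul hlow h3 (by positivity)
            (Real.rpow_nonneg (abs_nonneg _) _)
        have step2 : M ^ (q-1) / P * (3*L/4) * (L/4)
            ≤ ∫ s in w..(w + L/4), |s| ^ (q-1) * (k-s) := by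
          have hmono := intervalIntegral.integral_mono_on (by linarith : w ≤ w + L/4)
            (_root_.intervalIntegrable_const (c := M ^ (q-1) / P * (3*L/4)))
            (hIg w (w + L/4)) hptw
          rwa [intervalIntegral.integral_const, smul_eq_mul,
            (by ring : w + L/4 - w = L/4), mul_comm] at hmono
        have step1 : (∫ s in w..(w + L/4), |s| ^ (q-1) * (k-s)) ≤ I := by
          rw [hIdef]
          exact intervalIntegral.integral_mono_interval le_rfl (by linarith) (by linarith)
            (hae w k le_rfl) (hIg w k)
        have hnn : (0:ℝ) ≤ M ^ (q-1) / P := by positivity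
        calc M ^ (q-1) / P * (L^2/32)
            ≤ M ^ (q-1) / P * (3*L/4 * (L/4)) :=
              mul_le_mul_of_nonneg_left (by nlinarith [sq_nonneg L]) hnn
          _ = M ^ (q-1) / P * (3*L/4) * (L/4) := by ring
          _ ≤ _ := step2.trans step1
      · -- right subinterval [k - L/4, k]
        have hk0 : 0 < k := by
          by_contra h
          push_neg at h
          have h1 : |k| = -k := abs_of_nonpos h
          have h2 : -w ≤ |w| := neg_le_abs w
          linarith
        have habsk : |k| = k := abs_of_pos hk0
        have hkhalf : M / 2 ≤ k := by rw [hMdef]; linarith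
        have hptw : ∀ s ∈ Set.Icc (k - L/4) k,
            M ^ (q-1) / P * (k - s) ≤ |s| ^ (q-1) * (k - s) := by
          intro s hs
          have h1 : M/4 ≤ |s| := by
            have : M/4 ≤ s := by linarith [hs.1, hLM]
            linarith [le_abs_self s]
          have h2 : |s| ≤ M := by
            rw [abs_le]
            exact ⟨by linarith [hs.1, hLM], by linarith [hs.2]⟩
          have hlow := aux_lower q hM h1 h2
          rw [← hPdef] at hlow
          exact mul_le_mul_of_nonneg_right hlow (by linarith [hs.2])
        have hconst : IntervalIntegrable (fun s => M ^ (q-1) / P * (k - s)) volume (k - L/4) k :=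
          Continuous.intervalIntegrable
            (continuous_const.mul (continuous_const.sub continuous_id)) _ _
        have step2 : M ^ (q-1) / P * (L^2/32) ≤ ∫ s in (k - L/4)..k, |s| ^ (q-1) * (k-s) := by
          have hmono := intervalIntegral.integral_mono_on (by linarith : k - L/4 ≤ k)
            hconst (hIg (k - L/4) k) hptw
          rw [intervalIntegral.integral_const_mul, int_k_sub] at hmono
          have hcomp : k * (k - (k - L/4)) - (k^2 - (k - L/4)^2)/2 = L^2/32 := by ring
          rw [hcomp] at hmono
          exact hmono
        have step1 : (∫ s in (k - L/4)..k, |s| ^ (q-1) * (k-s)) ≤ I := by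
          rw [hIdef]
          exact intervalIntegral.integral_mono_interval (by linarith) (by linarith) le_rfl
            (hae w k le_rfl) (hIg w k)
        exact step2.trans step1
    -- UPPER BOUND
    have key_up : q * I ≤ c * M ^ (q-1) * L^2 := by
      have main_ptw : (∀ s ∈ Set.Icc w k, |s| ^ (q-1) * (k - s) ≤ P * M ^ (q-1) * (k - s)) →
          q * I ≤ c * M ^ (q-1) * L^2 := by
        intro hptw
        have hconst : IntervalIntegrable (fun s => P * M ^ (q-1) * (k - s)) volume w k :=
          Continuous.intervalIntegrable
            (continuous_const.mul (continuous_const.sub continuous_id)) _ _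
        have hmono := intervalIntegral.integral_mono_on hwk.le (hIg w k) hconst hptw
        rw [intervalIntegral.integral_const_mul, int_k_sub, ← hIdef] at hmono
        have hcomp : k * (k - w) - (k^2 - w^2)/2 = L^2/2 := by rw [hLdef]; ring
        rw [hcomp] at hmono
        calc q * I ≤ q * (P * M ^ (q-1) * (L^2/2)) := mul_le_mul_of_nonneg_left hmono hq.le
          _ = (q * P / 2) * (M ^ (q-1) * L^2) := by ring
          _ ≤ c * (M ^ (q-1) * L^2) :=
              mul_le_mul_of_nonneg_right hacb (by positivity)
          _ = c * M ^ (q-1) * L^2 := by ring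
      rcases le_or_gt (M / 4) L with hcase | hcase
      · rcases le_or_gt 1 q with hq1 | hq1
        · -- q ≥ 1
          apply main_ptw
          intro s hs
          have h2 : |s| ≤ M := abs_le.mpr ⟨by linarith [hs.1], by linarith [hs.2]⟩
          have hup := aux_upper1 q hq1 (abs_nonneg s) h2
          rw [← hPdef] at hup
          exact mul_le_mul_of_nonneg_right hup (by linarith [hs.2])
        · -- q < 1 and M ≤ 4 L
          have hptw : ∀ s ∈ Set.Icc w k,
              |s| ^ (q-1) * (k - s) ≤ |s| ^ (q-1) * L := by
            intro s hs
            exact mul_le_mul_of_nonneg_left (by linarith [hs.1])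
              (Real.rpow_nonneg (abs_nonneg _) _)
          have hintL : IntervalIntegrable (fun s => |s| ^ (q-1) * L) volume w k :=
            (abs_rpow_intInt hr w k).mul_const L
          have hmono := intervalIntegral.integral_mono_on hwk.le (hIg w k) hintL hptw
          rw [intervalIntegral.integral_mul_const, ← hIdef] at hmono
          have hext : (∫ s in w..k, |s| ^ (q-1)) ≤ ∫ s in (-M)..M, |s| ^ (q-1) := by
            apply intervalIntegral.integral_mono_interval hwM hwk.le hkM
            · filter_upwards with s
              exact Real.rpow_nonneg (abs_nonneg _) _
            · exact abs_rpow_intInt hr _ _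
          rw [int_abs_sym q hq hM.le] at hext
          have hMq : M ^ q = M ^ (q-1) * M := by
            rw [← Real.rpow_add_one hM.ne' (q-1)]
            ring_nf
          have hI2 : I ≤ 2 * M ^ q / q * L := by
            calc I ≤ (∫ s in w..k, |s| ^ (q-1)) * L := hmono
              _ ≤ 2 * M ^ q / q * L := mul_le_mul_of_nonneg_right hext hL.le
          have hqI : q * I ≤ 2 * M ^ q * L := by
            have hmul := mul_le_mul_of_nonneg_left hI2 hq.le
            have heq : q * (2 * M ^ q / q * L) = 2 * M ^ q * L := by field_simp
            rw [heq] at hmul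
            exact hmul
          calc q * I ≤ 2 * M ^ q * L := hqI
            _ = 2 * (M ^ (q-1) * M) * L := by rw [hMq]
            _ ≤ 2 * (M ^ (q-1) * (4 * L)) * L := by
                have hMM : M ^ (q-1) * M ≤ M ^ (q-1) * (4*L) :=
                  mul_le_mul_of_nonneg_left (by linarith) hMq1
                have := mul_le_mul_of_nonneg_right
                  (mul_le_mul_of_nonneg_left hMM (by norm_num : (0:ℝ) ≤ 2)) hL.le
                linarith [this]
            _ = 8 * M ^ (q-1) * L^2 := by ring
            _ ≤ c * M ^ (q-1) * L^2 := by
                exact mul_le_mul_of_nonneg_right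
                  (mul_le_mul_of_nonneg_right h8c hMq1) (sq_nonneg L)
      · -- small interval: L < M/4, so |s| ≥ M/4 on [w,k]
        apply main_ptw
        intro s hs
        have h2 : |s| ≤ M := abs_le.mpr ⟨by linarith [hs.1], by linarith [hs.2]⟩
        have h1 : M/4 ≤ |s| := by
          rcases lt_or_ge 0 w with hw0 | hw0
          · have hk0 : 0 < k := lt_trans hw0 hwk
            have hMw : M = w + k := by
              rw [hMdef, abs_of_pos hw0, abs_of_pos hk0]
            have : M/4 ≤ w := by
              rw [hLdef] at hcase
              linarith
            linarith [le_abs_self s, hs.1]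
          · have hk0 : k < 0 := by
              by_contra h
              push_neg at h
              have : L = M := by
                rw [hMdef, hLdef, abs_of_nonpos hw0, abs_of_nonneg h]
                ring
              linarith
            have hMw : M = -w - k := by
              rw [hMdef, abs_of_nonpos hw0, abs_of_neg hk0]
              ring
            have : M/4 ≤ -k := by
              rw [hLdef] at hcase
              linarith
            linarith [neg_le_abs s, hs.2]
        have hbd : |s| ^ (q-1) ≤ P * M ^ (q-1) := by
          rcases le_or_gt 1 q with hq1 | hq1
          · have hup := aux_upper1 q hq1 (abs_nonneg s) h2
            rw [← hPdef] at hup; exact hup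
          · have hup := aux_upper2 q hq1 hM h1
            rw [← hPdef] at hup; exact hup
        exact mul_le_mul_of_nonneg_right hbd (by linarith [hs.2])
    -- conclude
    rw [hmax, hflip]
    refine ⟨?_, key_up⟩
    have h1c : 1/c * M ^ (q-1) * L^2 ≤ q * (M ^ (q-1) / P * (L^2/32)) := by
      have h1 : 1/c ≤ q / (32 * P) := by
        rw [div_le_div_iff₀ hc (by positivity)]
        linarith
      calc 1/c * M ^ (q-1) * L^2 ≤ q / (32 * P) * M ^ (q-1) * L^2 :=
            mul_le_mul_of_nonneg_right (mul_le_mul_of_nonneg_right h1 hMq1) (sq_nonneg L)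
        _ = q * (M ^ (q-1) / P * (L^2/32)) := by field_simp
    exact h1c.trans (mul_le_mul_of_nonneg_left key_low hq.le)
end
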